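/- Let A₁, A₂, … be subsets of a domain D ⊆ ℂ whose limit set in D is empty. Then for every ordinal α, the derived set of order α with respect to D of the union ⋃ₙ Aₙ equals the union ⋃ₙ (Aₙ)_D^(α). -/

import Mathlib

open Filter Set Metric

/-- Iterated (transfinite) derived set of `E` with respect to `A`:
`E_A^(0) = E`, `E_A^(α+1) = (E_A^(α))' ∩ A`, and at limit stages the
intersection over `1 ≤ β < α`. -/
noncomputable def derivIter (A : Set ℂ) (E : Set ℂ) (o : Ordinal) : Set ℂ :=
  Ordinal.limitRecOn o E
    (fun _ ih => {z | z ∈ A ∧ AccPt z (Filter.principal ih)})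
    (fun o _ ih => ⋂ (β : Ordinal) (h : β < o) (_ : 1 ≤ β), ih β h)

/-- The limit set in `D` of a sequence of sets `A n`: the points `z ∈ D` such that
for every `ε > 0` and every `N` there is `n ≥ N` with `A n` meeting `Δ(z, ε)`. -/
def limitSetIn (D : Set ℂ) (A : ℕ → Set ℂ) : Set ℂ :=
  {z | z ∈ D ∧ ∀ ε > (0 : ℝ), ∀ N : ℕ, ∃ n ≥ N, (A n ∩ Metric.ball z ε).Nonempty}

open Topology

/-!
An empty limit set means that every `z ∈ D` has a neighbourhood `U` met by the closures of only
finitely many `A n`. Every derived set of `A n` lies in `closure (A n)`, so at a successor stage an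
accumulation point in `D` of `⋃ n, (A n)^(α)` is one of the finite union of those `(A n)^(α)`
that meet `U`, hence of a single `(A n)^(α)`. At a limit stage, the derived sets of order `≥ 1` decrease (they are
relatively closed in `D`), and a decreasing intersection commutes with the finite union over
those `n` with `z ∈ closure (A n)`.
-/

section DerivedSet

variable {X ι : Type*} [TopologicalSpace X]

theorem derivedSet_biUnion_of_finite {s : Set ι} (hs : s.Finite) (F : ι → Set X) :
    derivedSet (⋃ i ∈ s, F i) = ⋃ i ∈ s, derivedSet (F i) := by
  induction s, hs using Set.Finite.induction_on with
  | empty => ext x; simp [AccPt]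
  | insert _ _ ih => simp only [biUnion_insert, derivedSet_union, ih]

theorem mem_derivedSet_inter_of_mem_nhds {S U : Set X} {z : X} (hz : z ∈ derivedSet S)
    (hU : U ∈ 𝓝 z) : z ∈ derivedSet (S ∩ U) := by
  rw [mem_derivedSet, accPt_iff_frequently] at hz ⊢
  exact (hz.and_eventually hU).mono fun _ ⟨⟨hne, hS⟩, hU⟩ ↦ ⟨hne, hS, hU⟩

theorem exists_mem_derivedSet_of_mem_derivedSet_iUnion {F : ι → Set X} {z : X} {U : Set X}
    (hU : U ∈ 𝓝 z) (hfin : {i | (F i ∩ U).Nonempty}.Finite)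
    (hz : z ∈ derivedSet (⋃ i, F i)) : ∃ i, z ∈ derivedSet (F i) := by
  have hsub : (⋃ i, F i) ∩ U ⊆ ⋃ i ∈ {i | (F i ∩ U).Nonempty}, F i := by
    rintro w ⟨hw, hwU⟩
    obtain ⟨i, hi⟩ := mem_iUnion.1 hw
    exact mem_biUnion ⟨w, hi, hwU⟩ hi
  have := derivedSet_mono _ _ hsub (mem_derivedSet_inter_of_mem_nhds hz hU)
  rw [derivedSet_biUnion_of_finite hfin] at this
  obtain ⟨i, -, hi⟩ := mem_iUnion₂.1 this
  exact ⟨i, hi⟩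

end DerivedSet

theorem Set.exists_forall_mem_of_antitone {ι ι' α : Type*} [Preorder ι'] [IsDirectedOrder ι']
    [Nonempty ι'] {s : ι → ι' → Set α} (hs : ∀ i, Antitone (s i)) {x : α}
    (hfin : {i | ∃ j, x ∈ s i j}.Finite) (hx : ∀ j, ∃ i, x ∈ s i j) : ∃ i, ∀ j, x ∈ s i j := by
  have := hfin.to_subtype
  have hx' : x ∈ ⋂ j, ⋃ i : {i | ∃ j, x ∈ s i j}, s i j :=
    mem_iInter.2 fun j ↦ let ⟨i, hi⟩ := hx j; mem_iUnion.2 ⟨⟨i, j, hi⟩, hi⟩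
  rw [iInter_iUnion_of_antitone (ι := {i | ∃ j, x ∈ s i j}) fun i ↦ hs i] at hx'
  obtain ⟨i, hi⟩ := mem_iUnion.1 hx'
  exact ⟨i, mem_iInter.1 hi⟩

section derivIter

variable (D E : Set ℂ)

theorem derivIter_zero : derivIter D E 0 = E :=
  Ordinal.limitRecOn_zero ..

theorem derivIter_add_one (o : Ordinal) :
    derivIter D E (o + 1) = D ∩ derivedSet (derivIter D E o) :=
  Ordinal.limitRecOn_add_one ..

theorem derivIter_limit {o : Ordinal} (ho : Order.IsSuccLimit o) :
    derivIter D E o = ⋂ β ∈ Ico 1 o, derivIter D E β := by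
  rw [derivIter, Ordinal.limitRecOn_limit _ _ _ _ ho]
  ext z
  simp only [mem_iInter, mem_Ico, and_imp]
  exact ⟨fun h β h1 hβ ↦ h β hβ h1, fun h β hβ h1 ↦ h β h1 hβ⟩

theorem derivIter_one : derivIter D E 1 = D ∩ derivedSet E := by
  simpa [derivIter_zero] using derivIter_add_one D E 0

variable {D E}

theorem derivIter_mono {F : Set ℂ} (h : E ⊆ F) (o : Ordinal) :
    derivIter D E o ⊆ derivIter D F o := by
  induction o using Ordinal.limitRecOn with
  | zero => simpa only [derivIter_zero]
  | add_one o ih =>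
    simp only [derivIter_add_one]
    exact inter_subset_inter_right D (derivedSet_mono _ _ ih)
  | limit o ho ih =>
    simp only [derivIter_limit _ _ ho]
    exact biInter_mono subset_rfl fun β hβ ↦ ih β hβ.2

theorem inter_derivedSet_derivIter_subset {o : Ordinal} (ho : 1 ≤ o) :
    D ∩ derivedSet (derivIter D E o) ⊆ derivIter D E o := by
  induction o using Ordinal.limitRecOn with
  | zero => exact absurd ho (by simp)
  | add_one o _ =>
    rw [derivIter_add_one]
    refine inter_subset_inter_right D ?_
    calc derivedSet (D ∩ derivedSet (derivIter D E o))
        ⊆ derivedSet (derivedSet (derivIter D E o)) := derivedSet_mono _ _ inter_subset_right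
      _ ⊆ derivedSet (derivIter D E o) :=
        (isClosed_iff_derivedSet_subset _).1 (isClosed_derivedSet _)
  | limit o hlim ih =>
    rw [derivIter_limit _ _ hlim]
    refine subset_iInter₂ fun β hβ ↦ ?_
    calc D ∩ derivedSet (⋂ β ∈ Ico 1 o, derivIter D E β)
        ⊆ D ∩ derivedSet (derivIter D E β) :=
          inter_subset_inter_right D (derivedSet_mono _ _ (biInter_subset_of_mem hβ))
      _ ⊆ derivIter D E β := ih β hβ.2 hβ.1

theorem derivIter_antitoneOn : AntitoneOn (derivIter D E) (Ici 1) := by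
  rintro β (hβ : 1 ≤ β) o - hβo
  induction o using Ordinal.limitRecOn with
  | zero => exact absurd (hβ.trans hβo) (by simp)
  | add_one o ih =>
    rcases hβo.lt_or_eq with hlt | rfl
    · have hβo : β ≤ o := Order.lt_add_one_iff.1 hlt
      rw [derivIter_add_one]
      exact (inter_derivedSet_derivIter_subset (hβ.trans hβo)).trans (ih hβo)
    · exact subset_rfl
  | limit o ho _ =>
    rcases hβo.lt_or_eq with hlt | rfl
    · rw [derivIter_limit _ _ ho]
      exact biInter_subset_of_mem ⟨hβ, hlt⟩
    · exact subset_rfl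

theorem derivIter_subset_closure (o : Ordinal) : derivIter D E o ⊆ closure E := by
  rcases eq_zero_or_pos o with rfl | ho
  · rw [derivIter_zero]
    exact subset_closure
  · have h1o : 1 ≤ o := Order.one_le_iff_pos.2 ho
    calc derivIter D E o ⊆ derivIter D E 1 := derivIter_antitoneOn (mem_Ici.2 le_rfl) h1o h1o
      _ ⊆ closure E := by
          rw [derivIter_one]
          exact inter_subset_right.trans (derivedSet_subset_closure E)

theorem derivIter_subset_of_one_le {o : Ordinal} (ho : 1 ≤ o) : derivIter D E o ⊆ D := by
  calc derivIter D E o ⊆ derivIter D E 1 := derivIter_antitoneOn (mem_Ici.2 le_rfl) ho ho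
    _ ⊆ D := by
      rw [derivIter_one]
      exact inter_subset_left

theorem derivIter_iUnion {ι : Type*} (A : ι → Set ℂ)
    (hA : ∀ z ∈ D, ∃ U ∈ 𝓝 z, {i | (closure (A i) ∩ U).Nonempty}.Finite) (o : Ordinal) :
    derivIter D (⋃ i, A i) o = ⋃ i, derivIter D (A i) o := by
  refine subset_antisymm ?_ (iUnion_subset fun i ↦ derivIter_mono (subset_iUnion A i) o)
  induction o using Ordinal.limitRecOn with
  | zero => simp only [derivIter_zero, subset_rfl]
  | add_one o ih =>
    rw [derivIter_add_one]
    rintro z ⟨hzD, hz⟩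
    obtain ⟨U, hU, hfin⟩ := hA z hzD
    obtain ⟨i, hi⟩ := exists_mem_derivedSet_of_mem_derivedSet_iUnion hU
      (hfin.subset fun i ⟨w, hw, hwU⟩ ↦ ⟨w, derivIter_subset_closure o hw, hwU⟩)
      (derivedSet_mono _ _ ih hz)
    exact mem_iUnion.2 ⟨i, by rw [derivIter_add_one]; exact ⟨hzD, hi⟩⟩
  | limit o ho ih =>
    intro z hz
    rw [derivIter_limit _ _ ho] at hz
    have h1o := Ordinal.one_lt_of_isSuccLimit ho
    obtain ⟨U, hU, hfin⟩ := hA z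
      (derivIter_subset_of_one_le le_rfl (mem_iInter₂.1 hz 1 ⟨le_rfl, h1o⟩))
    have : Nonempty (Ico (1 : Ordinal) o) := ⟨⟨1, le_rfl, h1o⟩⟩
    obtain ⟨i, hi⟩ := exists_forall_mem_of_antitone (ι' := Ico (1 : Ordinal) o)
      (s := fun i β ↦ derivIter D (A i) β)
      (fun i β γ hβγ ↦ derivIter_antitoneOn β.2.1 γ.2.1 hβγ)
      (hfin.subset fun i ⟨β, hβ⟩ ↦ ⟨z, derivIter_subset_closure β hβ, mem_of_mem_nhds hU⟩)
      (fun β ↦ mem_iUnion.1 (ih β β.2.2 (mem_iInter₂.1 hz β β.2)))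
    refine mem_iUnion.2 ⟨i, ?_⟩
    rw [derivIter_limit _ _ ho]
    exact mem_iInter₂.2 fun β hβ ↦ hi ⟨β, hβ⟩

end derivIter

theorem finite_closure_inter_nhds_of_limitSetIn_eq_empty {D : Set ℂ} {A : ℕ → Set ℂ}
    (hlim : limitSetIn D A = ∅) :
    ∀ z ∈ D, ∃ U ∈ 𝓝 z, {n | (closure (A n) ∩ U).Nonempty}.Finite := by
  intro z hz
  have hz' : z ∉ limitSetIn D A := hlim ▸ notMem_empty z
  simp only [limitSetIn, mem_ofPred_eq, not_and, not_forall, not_exists] at hz'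
  obtain ⟨ε, hε, N, hN⟩ := hz' hz
  refine ⟨ball z ε, ball_mem_nhds z hε, (finite_lt_nat N).subset fun n hn ↦ ?_⟩
  exact lt_of_not_ge fun hNn ↦ hN n hNn ((closure_inter_open_nonempty_iff isOpen_ball).1 hn)

theorem stmt_9_general (D : Set ℂ) (A : ℕ → Set ℂ) (hlim : limitSetIn D A = ∅) :
    ∀ α : Ordinal, derivIter D (⋃ n, A n) α = ⋃ n, derivIter D (A n) α :=
  derivIter_iUnion A (finite_closure_inter_nhds_of_limitSetIn_eq_empty hlim)

theorem stmt_9 (D : Set ℂ) (hD : IsOpen D) (hDc : IsConnected D)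
    (A : ℕ → Set ℂ) (hA : ∀ n, A n ⊆ D) (hlim : limitSetIn D A = ∅) :
    ∀ α : Ordinal, derivIter D (⋃ n, A n) α = ⋃ n, derivIter D (A n) α :=
  stmt_9_general D A hlim
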